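/- Let K be a field, S = K[x_1,…,x_n], and let I ⊆ S be the PLP-polymatroidal ideal of type (a,b|α,β). Then for every integer k ≥ 1, the power I^k equals the PLP-polymatroidal ideal of type (ka, kb | kα, kβ); that is, I^k is generated by the monomials x^u with u ∈ ℕ^n satisfying k·a_i ≤ u_i ≤ k·b_i for all i and k·α_i ≤ u_1+⋯+u_i ≤ k·β_i for all i. -/

import Mathlib

open Finset MvPolynomial

/-- The PLP-polymatroidal ideal of type `(a, b | α, β)`. -/
noncomputable def PLPideal (K : Type*) [Field K] {n : ℕ} (a b α β : Fin n → ℕ) :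
    Ideal (MvPolynomial (Fin n) K) :=
  Ideal.span { m : MvPolynomial (Fin n) K | ∃ u : Fin n → ℕ,
    (∀ i, a i ≤ u i ∧ u i ≤ b i) ∧
    (∀ i, α i ≤ ∑ j ∈ Finset.Iic i, u j ∧ (∑ j ∈ Finset.Iic i, u j) ≤ β i) ∧
    m = ∏ i, (X i : MvPolynomial (Fin n) K) ^ u i }

/-!
The product of the PLP ideals of types `(a, b | α, β)` and `(ma, mb | mα, mβ)` is spanned by the
monomials whose exponents lie in the Minkowski sum of the two base sets, so by induction on `k`
it suffices to show that this sum is `B((m+1)a, (m+1)b | (m+1)α, (m+1)β)`. One inclusion is the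
additivity of the defining inequalities. For the other, let `s_i` be the partial sums of `u`.
The floors `⌊s_i / (m+1)⌋` are the partial sums of some `v`: an increment of `s` lying between
`(m+1)p` and `(m+1)q` makes `⌊s / (m+1)⌋` grow by between `p` and `q`, and leaves a remainder
between `mp` and `mq`; the same holds for `s` itself, viewed as an
increment from `0`. Hence `v ∈ B(a, b | α, β)` and `u - v ∈ B(ma, mb | mα, mβ)`.
-/

namespace Nat

lemma le_div_sub_div {k c x y : ℕ} (hk : 0 < k) (h : k * c ≤ y - x) : c ≤ y / k - x / k := by
  rcases Nat.eq_zero_or_pos c with rfl | hc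
  · exact Nat.zero_le _
  have : x / k + c ≤ y / k := by
    rw [← Nat.add_mul_div_left x c hk]
    exact Nat.div_le_div_right (by have := Nat.mul_pos hk hc; omega)
  omega

lemma div_sub_div_le {k c x y : ℕ} (hk : 0 < k) (h : y - x ≤ k * c) : y / k - x / k ≤ c := by
  have : y / k ≤ x / k + c := by
    rw [← Nat.add_mul_div_left x c hk]
    exact Nat.div_le_div_right (by omega)
  omega

lemma le_succ_mul_sub_mul {m a δ : ℕ} (h : (m + 1) * a ≤ δ) : δ ≤ (m + 1) * (δ - m * a) := by
  obtain ⟨e, rfl⟩ : ∃ e, δ = m * a + e := ⟨δ - m * a, by rw [add_one_mul] at h; omega⟩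
  rw [Nat.add_sub_cancel_left]
  nlinarith

lemma succ_mul_sub_mul_le {m b δ : ℕ} (h : δ ≤ (m + 1) * b) : (m + 1) * (δ - m * b) ≤ δ := by
  rcases le_total δ (m * b) with hle | hle
  · simp [Nat.sub_eq_zero_of_le hle]
  obtain ⟨e, rfl⟩ := Nat.exists_eq_add_of_le hle
  rw [Nat.add_sub_cancel_left]
  nlinarith

lemma div_sub_div_bounds {m a b x y : ℕ} (ha : (m + 1) * a ≤ y - x) (hb : y - x ≤ (m + 1) * b) :
    (a ≤ y / (m + 1) - x / (m + 1) ∧ y / (m + 1) - x / (m + 1) ≤ b) ∧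
      (m * a ≤ y - x - (y / (m + 1) - x / (m + 1)) ∧
        y - x - (y / (m + 1) - x / (m + 1)) ≤ m * b) := by
  have hk : 0 < m + 1 := m.succ_pos
  have h₁ := div_sub_div_le hk (le_succ_mul_sub_mul ha)
  have h₂ := le_div_sub_div hk (succ_mul_sub_mul_le hb)
  have h₃ : m * a ≤ (m + 1) * a := Nat.mul_le_mul_right a m.le_succ
  exact ⟨⟨le_div_sub_div hk ha, div_sub_div_le hk hb⟩, by omega, by omega⟩

end Nat

lemma Fin.sum_Iic_eq_sum_range {M : Type*} [AddCommMonoid M] {n : ℕ} (f : ℕ → M) (i : Fin n) :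
    ∑ j ∈ Iic i, f j = ∑ t ∈ range (i + 1), f t := by
  rw [Nat.range_succ_eq_Iic, ← Fin.map_valEmbedding_Iic, sum_map]
  rfl

def plpBase {n : ℕ} (a b α β : Fin n → ℕ) : Set (Fin n → ℕ) :=
  {u | (∀ i, a i ≤ u i ∧ u i ≤ b i) ∧ ∀ i, α i ≤ ∑ j ∈ Iic i, u j ∧ ∑ j ∈ Iic i, u j ≤ β i}

section plpBase

open Pointwise

variable {n : ℕ} {a b α β : Fin n → ℕ}

lemma add_mem_plpBase {a' b' α' β' u v : Fin n → ℕ} (hu : u ∈ plpBase a b α β)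
    (hv : v ∈ plpBase a' b' α' β') : u + v ∈ plpBase (a + a') (b + b') (α + α') (β + β') := by
  refine ⟨fun i => ?_, fun i => ?_⟩
  · have := hu.1 i; have := hv.1 i
    simp only [Pi.add_apply]
    omega
  · have := hu.2 i; have := hv.2 i
    simp only [Pi.add_apply, sum_add_distrib]
    omega

lemma plpBase_add_subset (a' b' α' β' : Fin n → ℕ) :
    plpBase a b α β + plpBase a' b' α' β' ⊆ plpBase (a + a') (b + b') (α + α') (β + β') := by
  rintro _ ⟨u, hu, v, hv, rfl⟩
  exact add_mem_plpBase hu hv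

lemma plpBase_succ_smul_subset_add (m : ℕ) :
    plpBase ((m + 1) • a) ((m + 1) • b) ((m + 1) • α) ((m + 1) • β) ⊆
      plpBase a b α β + plpBase (m • a) (m • b) (m • α) (m • β) := by
  rintro u ⟨hu, hsum⟩
  set S : ℕ → ℕ := fun t => ∑ s ∈ range t, Function.extend Fin.val u 0 s
  have hS_mono : Monotone S := fun _ _ h => sum_le_sum_of_subset (range_mono h)
  have hS_Iic (i : Fin n) : ∑ j ∈ Iic i, u j = S (i + 1) := by
    show _ = ∑ s ∈ range (i + 1), _
    rw [← Fin.sum_Iic_eq_sum_range]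
    exact sum_congr rfl fun j _ => (Fin.val_injective.extend_apply u 0 j).symm
  have hS_succ (i : Fin n) : u i = S (i + 1) - S i := by
    simp only [S, sum_range_succ, Fin.val_injective.extend_apply, add_tsub_cancel_left]
  set v : Fin n → ℕ := fun j => S (j + 1) / (m + 1) - S j / (m + 1)
  have hv_Iic (i : Fin n) : ∑ j ∈ Iic i, v j = S (i + 1) / (m + 1) := by
    rw [Fin.sum_Iic_eq_sum_range (fun t => S (t + 1) / (m + 1) - S t / (m + 1)),
      sum_range_tsub (f := fun t => S t / (m + 1)) fun _ _ h => Nat.div_le_div_right (hS_mono h)]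
    simp [S]
  have hinc (i : Fin n) := Nat.div_sub_div_bounds (x := S i) (y := S (i + 1))
    (by simpa [← hS_succ] using (hu i).1) (by simpa [← hS_succ] using (hu i).2)
  have hpart (i : Fin n) := Nat.div_sub_div_bounds (x := 0) (y := S (i + 1))
    (by simpa [← hS_Iic] using (hsum i).1) (by simpa [← hS_Iic] using (hsum i).2)
  simp only [Nat.zero_div, tsub_zero] at hpart
  have hvu : v ≤ u := fun j => by
    rw [hS_succ j]
    exact Nat.div_sub_div_le m.succ_pos (Nat.le_mul_of_pos_left _ m.succ_pos)
  have hw_Iic (i : Fin n) : ∑ j ∈ Iic i, (u - v) j = S (i + 1) - S (i + 1) / (m + 1) := by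
    rw [sum_congr rfl fun j _ => Pi.sub_apply u v j, sum_tsub_distrib _ fun j _ => hvu j,
      hS_Iic, hv_Iic]
  refine ⟨v, ⟨fun i => (hinc i).1, fun i => hv_Iic i ▸ (hpart i).1⟩, u - v,
    ⟨fun i => ?_, fun i => hw_Iic i ▸ (hpart i).2⟩, add_tsub_cancel_of_le hvu⟩
  simpa [hS_succ i] using (hinc i).2

lemma plpBase_add_smul (m : ℕ) :
    plpBase a b α β + plpBase (m • a) (m • b) (m • α) (m • β) =
      plpBase ((m + 1) • a) ((m + 1) • b) ((m + 1) • α) ((m + 1) • β) := by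
  refine subset_antisymm ?_ (plpBase_succ_smul_subset_add m)
  simpa only [succ_nsmul'] using plpBase_add_subset (m • a) (m • b) (m • α) (m • β)

end plpBase

section ideal

open Pointwise

variable {n : ℕ}

lemma span_image_prod_X_pow_mul (R : Type*) [CommSemiring R] (A B : Set (Fin n → ℕ)) :
    Ideal.span ((fun u => ∏ i, (X i : MvPolynomial (Fin n) R) ^ u i) '' A) *
        Ideal.span ((fun u => ∏ i, (X i : MvPolynomial (Fin n) R) ^ u i) '' B) =
      Ideal.span ((fun u => ∏ i, (X i : MvPolynomial (Fin n) R) ^ u i) '' (A + B)) := by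
  rw [Ideal.span_mul_span', ← Set.image2_mul, ← Set.image2_add, Set.image2_image_left,
    Set.image2_image_right, Set.image_image2]
  simp only [Pi.add_apply, pow_add, prod_mul_distrib]

lemma PLPideal_eq_span_plpBase (K : Type*) [Field K] (a b α β : Fin n → ℕ) :
    PLPideal K a b α β =
      Ideal.span ((fun u => ∏ i, (X i : MvPolynomial (Fin n) K) ^ u i) '' plpBase a b α β) := by
  simp only [PLPideal, plpBase, Set.image, Set.mem_ofPred_eq, eq_comm, and_assoc]

lemma PLPideal_mul_smul (K : Type*) [Field K] (a b α β : Fin n → ℕ) (m : ℕ) :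
    PLPideal K a b α β * PLPideal K (m • a) (m • b) (m • α) (m • β) =
      PLPideal K ((m + 1) • a) ((m + 1) • b) ((m + 1) • α) ((m + 1) • β) := by
  simp only [PLPideal_eq_span_plpBase, span_image_prod_X_pow_mul, plpBase_add_smul]

end ideal

theorem PLPideal_pow_general (K : Type*) [Field K] {n : ℕ}
    (a b α β : Fin n → ℕ) :
    ∀ k : ℕ, 1 ≤ k →
      (PLPideal K a b α β) ^ k =
        PLPideal K (fun i => k * a i) (fun i => k * b i)
          (fun i => k * α i) (fun i => k * β i) := by
  intro k hk
  induction k, hk using Nat.le_induction with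
  | base => simp only [pow_one, one_mul]
  | succ k _ ih =>
    rw [pow_succ', ih]
    exact PLPideal_mul_smul K a b α β k

/-- powers of a PLP-polymatroidal ideal of type `(a,b|α,β)` are
the PLP-polymatroidal ideals of type `(ka, kb | kα, kβ)`. -/
theorem PLPideal_pow (K : Type*) [Field K] {n d : ℕ} (hn : 0 < n) (hd : 0 < d)
    (a b α β : Fin n → ℕ)
    (hαm : Monotone α) (hβm : Monotone β)
    (hlast : ∀ i : Fin n, (i : ℕ) = n - 1 → α i = d ∧ β i = d)
    (hαβ : ∀ i, α i ≤ β i) :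
    ∀ k : ℕ, 1 ≤ k →
      (PLPideal K a b α β) ^ k =
        PLPideal K (fun i => k * a i) (fun i => k * b i)
          (fun i => k * α i) (fun i => k * β i) :=
  PLPideal_pow_general K a b α β
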